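/- For every positive integer n there exists an integer N such that every connected graph with independence number at least N contains an induced subgraph isomorphic to P_n, H_n^1, or K_{1,n}. -/

import Mathlib

open SimpleGraph Finset

/-- An independent set: pairwise non-adjacent vertices. -/
def IsIndepSet' {V : Type*} (G : SimpleGraph V) (s : Set V) : Prop :=
  s.Pairwise fun a b => ¬ G.Adj a b

/-- `v` is a cut-vertex of `G`: deleting `v` increases the number of connected components. -/
def IsCutVertex {V : Type*} (G : SimpleGraph V) (v : V) : Prop :=
  Nat.card G.ConnectedComponent < Nat.card (G.induce {v}ᶜ).ConnectedComponent

/-- `G` contains an induced subgraph isomorphic to `H`. -/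
def HasInducedCopy {V W : Type*} (G : SimpleGraph V) (H : SimpleGraph W) : Prop :=
  ∃ s : Set V, Nonempty (H ≃g G.induce s)

/-- `H_n^1`: the complete graph on `Fin n` (the `Sum.inl` part) with a pendant vertex
(`Sum.inr i`) attached to each clique vertex `Sum.inl i`. -/
def Hgraph1 (n : ℕ) : SimpleGraph (Fin n ⊕ Fin n) :=
  SimpleGraph.fromRel (fun a b => match a, b with
    | Sum.inl _, Sum.inl _ => True
    | Sum.inl i, Sum.inr j => i = j
    | _, _ => False)

/-- `H_n^2`: the complete graph on `Fin n` with a path of length 2 attached to each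
clique vertex: `Sum.inl i` — `Sum.inr (Sum.inl i)` — `Sum.inr (Sum.inr i)`. -/
def Hgraph2 (n : ℕ) : SimpleGraph (Fin n ⊕ (Fin n ⊕ Fin n)) :=
  SimpleGraph.fromRel (fun a b => match a, b with
    | Sum.inl _, Sum.inl _ => True
    | Sum.inl i, Sum.inr (Sum.inl j) => i = j
    | Sum.inr (Sum.inl i), Sum.inr (Sum.inr j) => i = j
    | _, _ => False)

/-- `T_n`: the complete graph on `Fin n` with a triangle attached at each clique vertex. -/
def Tgraph (n : ℕ) : SimpleGraph (Fin n ⊕ (Fin n ⊕ Fin n)) :=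
  SimpleGraph.fromRel (fun a b => match a, b with
    | Sum.inl _, Sum.inl _ => True
    | Sum.inl i, Sum.inr (Sum.inl j) => i = j
    | Sum.inl i, Sum.inr (Sum.inr j) => i = j
    | Sum.inr (Sum.inl i), Sum.inr (Sum.inr j) => i = j
    | _, _ => False)

/-- `S_n^2`: the spider with `n` legs of length 2 (center `Sum.inl ()`). -/
def Sgraph2 (n : ℕ) : SimpleGraph (Unit ⊕ (Fin n ⊕ Fin n)) :=
  SimpleGraph.fromRel (fun a b => match a, b with
    | Sum.inl _, Sum.inr (Sum.inl _) => True
    | Sum.inr (Sum.inl i), Sum.inr (Sum.inr j) => i = j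
    | _, _ => False)

/-- `F_n`: `n` triangles sharing exactly one common vertex (the center `Sum.inl ()`). -/
def Fgraph (n : ℕ) : SimpleGraph (Unit ⊕ (Fin n ⊕ Fin n)) :=
  SimpleGraph.fromRel (fun a b => match a, b with
    | Sum.inl _, Sum.inr _ => True
    | Sum.inr (Sum.inl i), Sum.inr (Sum.inr j) => i = j
    | _, _ => False)

/-- The matching number of `G`. -/
noncomputable def matchNum {V : Type*} (G : SimpleGraph V) : ℕ :=
  sSup {k | ∃ M : G.Subgraph, M.IsMatching ∧ M.edgeSet.ncard = k}

/-- The vertex cover number of `G`. -/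
noncomputable def coverNum {V : Type*} (G : SimpleGraph V) : ℕ :=
  sInf {k | ∃ s : Set V, (∀ ⦃u w⦄, G.Adj u w → u ∈ s ∨ w ∈ s) ∧ s.ncard = k}

/-!
Fix a vertex `r`. If some vertex lies at distance at least `n - 1` from `r`, a shortest path
is an induced `P_n`. Otherwise a large independent set has many vertices on one sphere around `r`,
and we descend sphere by sphere. The parents (on the sphere of radius `k`) of an independent set on
the sphere of radius `k + 1` either include one with `n` children, a `K_{1,n}`, or are numerous;
by Ramsey they then contain a large independent set, with which we descend, or a large clique.
Each clique vertex has a private child; if one clique vertex sees `n` of these children we get a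
`K_{1,n}`, and otherwise `n` clique vertices avoiding each other's children, chosen greedily,
span an induced `H_n^1`. The descent cannot reach the sphere of radius `0`, a single vertex.
-/

namespace Finset

theorem exists_subset_pairwise_not_rel {α : Type*} [DecidableEq α] (r : α → α → Prop)
    [DecidableRel r] (d k : ℕ) (t : Finset α) (hdeg : ∀ x ∈ t, #{y ∈ t | r x y} ≤ d)
    (hcard : k * (2 * d + 1) ≤ #t) :
    ∃ u ⊆ t, #u = k ∧ (u : Set α).Pairwise fun x y => ¬ r x y := by
  induction k generalizing t with
  | zero => exact ⟨∅, empty_subset t, rfl, by simp⟩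
  | succ k ih =>
    have ht : t.Nonempty := card_pos.1 (by nlinarith)
    -- the in-degrees sum to the out-degrees, so some in-degree is at most `d`
    obtain ⟨x, hxt, hx⟩ : ∃ x ∈ t, #{y ∈ t | r y x} ≤ d := by
      refine exists_le_of_sum_le ht ?_
      calc ∑ x ∈ t, #{y ∈ t | r y x} = ∑ y ∈ t, #{x ∈ t | r y x} :=
            (sum_card_bipartiteAbove_eq_sum_card_bipartiteBelow (s := t) (t := t) (r := r)).symm
        _ ≤ ∑ _x ∈ t, d := sum_le_sum hdeg
    set X := insert x ({y ∈ t | r x y} ∪ {y ∈ t | r y x})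
    have hX : #X ≤ 2 * d + 1 :=
      (card_insert_le _ _).trans (by grw [card_union_le, hdeg x hxt, hx]; omega)
    obtain ⟨u, hut, hu, hpair⟩ := ih (t \ X)
      (fun y hy => (card_le_card (filter_subset_filter _ sdiff_subset)).trans
        (hdeg y (mem_sdiff.1 hy).1))
      (by have := le_card_sdiff X t; rw [Nat.succ_mul] at hcard; omega)
    have hxu : ∀ y ∈ u, ¬ r x y ∧ ¬ r y x := fun y hy => by
      obtain ⟨hyt, hyX⟩ := mem_sdiff.1 (hut hy)
      simp only [X, mem_insert, mem_union, mem_filter, not_or, not_and] at hyX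
      exact ⟨hyX.2.1 hyt, hyX.2.2 hyt⟩
    refine ⟨insert x u, insert_subset hxt (hut.trans sdiff_subset), ?_, ?_⟩
    · rw [card_insert_of_notMem fun hx => (mem_sdiff.1 (hut hx)).2 (mem_insert_self x _), hu]
    · rw [coe_insert, Set.pairwise_insert]
      exact ⟨hpair, fun y hy _ => hxu y hy⟩

end Finset

namespace SimpleGraph

variable {V W : Type*} {G : SimpleGraph V} {n : ℕ}

theorem exists_isNClique_or_isNIndepSet (G : SimpleGraph V) (a b : ℕ) (s : Finset V)
    (hs : (a + b).choose a ≤ #s) :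
    (∃ t ⊆ s, G.IsNClique a t) ∨ ∃ t ⊆ s, G.IsNIndepSet b t := by
  classical
  induction hk : a + b using Nat.strong_induction_on generalizing G a b s with
  | _ k ih =>
  obtain _ | a := a
  · exact Or.inl ⟨∅, empty_subset s, by simp⟩
  obtain _ | b := b
  · exact Or.inr ⟨∅, empty_subset s, by simp [isNIndepSet_iff]⟩
  obtain ⟨v, hv⟩ := card_pos.1 (hs.trans_lt' (Nat.choose_pos (by omega)))
  have grow : ∀ (H : SimpleGraph V) (N : Finset V) (c : ℕ), N ⊆ s → (∀ x ∈ N, H.Adj v x) →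
      (∃ t ⊆ N, H.IsNClique c t) → ∃ t ⊆ s, H.IsNClique (c + 1) t :=
    fun H N c hNs hN ⟨t, htN, ht⟩ =>
      ⟨insert v t, insert_subset hv (htN.trans hNs), ht.insert fun x hx => hN x (htN hx)⟩
  set N := {x ∈ s.erase v | G.Adj v x}
  set M := {x ∈ s.erase v | ¬ G.Adj v x}
  have hNM : #N + #M + 1 = #s := by
    rw [card_filter_add_card_filter_not, card_erase_add_one hv]
  have hpascal : (a + 1 + (b + 1)).choose (a + 1) =
      (a + (b + 1)).choose a + (b + (a + 1)).choose b := by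
    rw [show a + 1 + (b + 1) = a + b + 1 + 1 by omega, Nat.choose_succ_succ',
      show b + (a + 1) = a + b + 1 by omega, show a + (b + 1) = a + b + 1 by omega,
      Nat.choose_symm_of_eq_add (n := a + b + 1) (a := a + 1) (b := b) (by omega)]
  by_cases hN : (a + (b + 1)).choose a ≤ #N
  · refine (ih _ (by omega) G a (b + 1) N hN rfl).imp (grow G N a ?_ ?_) ?_
    · exact (filter_subset _ _).trans (erase_subset v s)
    · exact fun x hx => (mem_filter.1 hx).2
    · exact fun ⟨t, htN, ht⟩ => ⟨t, htN.trans ((filter_subset _ _).trans (erase_subset v s)), ht⟩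
  · -- the same step in `Gᶜ`, where cliques and independent sets trade places
    have hM : (b + (a + 1)).choose b ≤ #M := by omega
    refine (ih _ (by omega) Gᶜ b (a + 1) M hM rfl).symm.imp ?_ ?_
    · rintro ⟨t, htM, ht⟩
      exact ⟨t, htM.trans ((filter_subset _ _).trans (erase_subset v s)),
        (isNIndepSet_compl _).1 ht⟩
    · intro h
      obtain ⟨t, hts, ht⟩ := grow Gᶜ M b ((filter_subset _ _).trans (erase_subset v s))
        (fun x hx => by
          obtain ⟨hx, hadj⟩ := mem_filter.1 hx
          exact (compl_adj G v x).2 ⟨(ne_of_mem_erase hx).symm, hadj⟩)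
        h
      exact ⟨t, hts, (isNClique_compl _).1 ht⟩

theorem hasInducedCopy_of_injective {H : SimpleGraph W} (f : W → V) (hf : Function.Injective f)
    (hadj : ∀ a b, G.Adj (f a) (f b) ↔ H.Adj a b) : HasInducedCopy G H :=
  isIndContained_iff_exists_iso_induce.1 (Embedding.isIndContained ⟨⟨f, hf⟩, hadj _ _⟩)

theorem Walk.dist_getVert_of_length_eq_dist {u v : V} (p : G.Walk u v)
    (hp : p.length = G.dist u v) {i : ℕ} (hi : i ≤ p.length) : G.dist u (p.getVert i) = i := by
  have := length_eq_dist_of_subwalk hp (p.isSubwalk_take i)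
  rw [Walk.take_length] at this
  omega

theorem Reachable.exists_adj_dist_eq {r a : V} (hr : G.Reachable r a) {k : ℕ}
    (h : G.dist r a = k + 1) : ∃ u, G.Adj u a ∧ G.dist r u = k := by
  obtain ⟨p, hp⟩ := hr.exists_walk_length_eq_dist
  refine ⟨p.getVert k, ?_, p.dist_getVert_of_length_eq_dist hp (by omega)⟩
  have := p.adj_getVert_succ (i := k) (by omega)
  rwa [show k + 1 = p.length by omega, p.getVert_length] at this

/-- A shortest path is an induced path. -/
theorem hasInducedCopy_pathGraph_of_le_dist {u v : V} (hr : G.Reachable u v)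
    (h : n ≤ G.dist u v + 1) : HasInducedCopy G (pathGraph n) := by
  obtain ⟨p, hp⟩ := hr.exists_walk_length_eq_dist
  have hdist (i : Fin n) : G.dist u (p.getVert i) = i :=
    p.dist_getVert_of_length_eq_dist hp (by omega)
  refine hasInducedCopy_of_injective (fun i : Fin n => p.getVert i)
    (fun i j hij => Fin.ext (by simpa [hdist] using congrArg (G.dist u) hij)) fun i j => ?_
  rw [pathGraph_adj]
  constructor
  · intro hadj
    have hij : (i : ℕ) ≠ j := fun hij => hadj.ne (by rw [Fin.ext hij])
    have := hadj.diff_dist_adj (u := u)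
    rw [hdist, hdist] at this
    omega
  · rintro (hij | hij)
    · simpa [← hij] using p.adj_getVert_succ (i := i) (by omega)
    · simpa [← hij] using (p.adj_getVert_succ (i := j) (by omega)).symm

theorem hasInducedCopy_star {v : V} {T : Finset V} (hT : n ≤ #T) (hadj : ∀ x ∈ T, G.Adj v x)
    (hind : G.IsIndepSet T) : HasInducedCopy G (completeBipartiteGraph (Fin 1) (Fin n)) := by
  let l : Fin n ↪ T := (Fin.castLEEmb hT).trans T.equivFin.symm.toEmbedding
  have hl : Function.Injective fun i => (l i : V) := Subtype.val_injective.comp l.injective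
  refine hasInducedCopy_of_injective (Sum.elim (fun _ => v) fun i => l i)
    ((Function.injective_of_subsingleton _).sumElim hl fun _ i => (hadj _ (l i).2).ne) ?_
  rintro (i | i) (j | j)
  · simp
  · simpa using hadj _ (l j).2
  · simpa using (hadj _ (l i).2).symm
  · simpa using fun h : G.Adj (l i) (l j) => hind (l i).2 (l j).2 h.ne h

@[simp] theorem hgraph1_adj_inl_inl {i j : Fin n} :
    (Hgraph1 n).Adj (.inl i) (.inl j) ↔ i ≠ j := by
  simp [Hgraph1]

@[simp] theorem hgraph1_adj_inl_inr {i j : Fin n} :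
    (Hgraph1 n).Adj (.inl i) (.inr j) ↔ i = j := by
  simp [Hgraph1]

@[simp] theorem hgraph1_adj_inr_inl {i j : Fin n} :
    (Hgraph1 n).Adj (.inr i) (.inl j) ↔ i = j := by
  simp [Hgraph1, eq_comm]

@[simp] theorem hgraph1_adj_inr_inr {i j : Fin n} : ¬ (Hgraph1 n).Adj (.inr i) (.inr j) := by
  simp [Hgraph1]

theorem hasInducedCopy_hgraph1 {E : Finset V} {p : V → V} (hE : #E = n) (hclique : G.IsClique E)
    (hpend : ∀ c ∈ E, G.Adj c (p c))
    (hcross : (E : Set V).Pairwise fun c c' => ¬ G.Adj c (p c'))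
    (hind : G.IsIndepSet (p '' E)) : HasInducedCopy G (Hgraph1 n) := by
  let e : Fin n ≃ E := (E.equivFinOfCardEq hE).symm
  have he : Function.Injective fun i => (e i : V) := Subtype.val_injective.comp e.injective
  have hpe : Function.Injective fun i => p (e i) := fun i j (hij : p (e i) = p (e j)) => he <| by
    by_contra hne
    exact hcross (e i).2 (e j).2 hne (hij ▸ hpend _ (e i).2)
  have hne (i j : Fin n) : (e i : V) ≠ p (e j) := fun h => by
    have hadj := hpend _ (e i).2
    rw [h] at hadj
    exact hind ⟨_, (e j).2, rfl⟩ ⟨_, (e i).2, h ▸ rfl⟩ hadj.ne hadj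
  refine hasInducedCopy_of_injective (Sum.elim (fun i => e i) fun i => p (e i))
    (he.sumElim hpe hne) ?_
  rintro (i | i) (j | j) <;> simp only [Sum.elim_inl, Sum.elim_inr, hgraph1_adj_inl_inl,
    hgraph1_adj_inl_inr, hgraph1_adj_inr_inl, hgraph1_adj_inr_inr, iff_false]
  · exact ⟨fun h hij => h.ne (by rw [hij]), fun hij => hclique (e i).2 (e j).2 (he.ne hij)⟩
  · refine ⟨fun h => by_contra fun hij => hcross (e i).2 (e j).2 (he.ne hij) h, ?_⟩
    rintro rfl
    exact hpend _ (e i).2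
  · refine ⟨fun h => by_contra fun hij => hcross (e j).2 (e i).2 (he.ne (Ne.symm hij)) h.symm, ?_⟩
    rintro rfl
    exact (hpend _ (e i).2).symm
  · exact fun h => hind ⟨_, (e i).2, rfl⟩ ⟨_, (e j).2, rfl⟩ h.ne h

theorem hgraph1_or_star_of_isClique {C : Finset V} {p : V → V} (hC : G.IsClique C)
    (hcard : n * (2 * n + 1) ≤ #C) (hinj : Set.InjOn p C) (hpend : ∀ c ∈ C, G.Adj c (p c))
    (hind : G.IsIndepSet (p '' C)) :
    HasInducedCopy G (Hgraph1 n) ∨ HasInducedCopy G (completeBipartiteGraph (Fin 1) (Fin n)) := by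
  classical
  by_cases hstar : ∃ c ∈ C, n ≤ #{c' ∈ C | G.Adj c (p c')}
  · obtain ⟨c, -, hc⟩ := hstar
    refine Or.inr (hasInducedCopy_star (v := c) (T := image p {c' ∈ C | G.Adj c (p c')}) ?_ ?_ ?_)
    · rwa [card_image_of_injOn (hinj.mono (coe_subset.2 (filter_subset _ _)))]
    · intro x hx
      obtain ⟨c', hc', rfl⟩ := mem_image.1 hx
      exact (mem_filter.1 hc').2
    · exact hind.mono (by rw [coe_image]; exact Set.image_mono (coe_subset.2 (filter_subset _ _)))
  · push Not at hstar
    obtain ⟨E, hEC, hE, hcross⟩ := exists_subset_pairwise_not_rel (fun c c' => G.Adj c (p c')) n n C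
      (fun c hc => (hstar c hc).le) hcard
    exact Or.inl (hasInducedCopy_hgraph1 hE (hC.subset (by simpa using hEC))
      (fun c hc => hpend c (hEC hc)) hcross (hind.mono (Set.image_mono (by simpa using hEC))))

theorem star_or_card_le_mul_card_image [DecidableEq V] {A : Finset V} {g : V → V}
    (hg : ∀ a ∈ A, G.Adj (g a) a) (hA : G.IsIndepSet A) :
    HasInducedCopy G (completeBipartiteGraph (Fin 1) (Fin n)) ∨ #A ≤ (n - 1) * #(A.image g) := by
  by_cases hstar : ∃ u ∈ A.image g, n ≤ #{a ∈ A | g a = u}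
  · obtain ⟨u, -, hu⟩ := hstar
    refine Or.inl (hasInducedCopy_star (v := u) hu (fun a ha => ?_)
      (hA.mono (coe_subset.2 (filter_subset _ _))))
    obtain ⟨haA, rfl⟩ := mem_filter.1 ha
    exact hg a haA
  · push Not at hstar
    exact Or.inr (card_le_mul_card_image A (n - 1) fun u hu => Nat.le_sub_one_of_lt (hstar u hu))

theorem hgraph1_or_star_or_exists_isNIndepSet_of_dist_eq_succ (hG : G.Connected) {r : V}
    {k m : ℕ} {A : Finset V} (hA : G.IsIndepSet A) (hdist : ∀ a ∈ A, G.dist r a = k + 1)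
    (hcard : (n - 1) * (n * (2 * n + 1) + m).choose (n * (2 * n + 1)) < #A) :
    HasInducedCopy G (Hgraph1 n) ∨ HasInducedCopy G (completeBipartiteGraph (Fin 1) (Fin n)) ∨
      ∃ B : Finset V, G.IsNIndepSet m B ∧ ∀ b ∈ B, G.dist r b = k := by
  classical
  choose! g hgadj hgdist using fun a (ha : a ∈ A) => (hG r a).exists_adj_dist_eq (hdist a ha)
  obtain hstar | hU := star_or_card_le_mul_card_image hgadj hA
  · exact Or.inr (Or.inl hstar)
  have hR : (n * (2 * n + 1) + m).choose (n * (2 * n + 1)) ≤ #(A.image g) :=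
    (Nat.lt_of_mul_lt_mul_left (hcard.trans_le hU)).le
  obtain ⟨C, hCU, hC⟩ | ⟨B, hBU, hB⟩ := exists_isNClique_or_isNIndepSet G _ _ _ hR
  · choose! p hpA hgp using fun c (hc : c ∈ C) => mem_image.1 (hCU hc)
    refine (hgraph1_or_star_of_isClique hC.isClique hC.card_eq.ge
      (Set.LeftInvOn.injOn (f₁' := g) hgp) (fun c hc => ?_) ?_).imp_right Or.inl
    · simpa [hgp c hc] using hgadj _ (hpA c hc)
    · refine hA.mono (Set.image_subset_iff.2 fun c hc => ?_)
      exact hpA c hc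
  · refine Or.inr (Or.inr ⟨B, hB, fun b hb => ?_⟩)
    obtain ⟨a, ha, rfl⟩ := mem_image.1 (hBU hb)
    exact hgdist a ha

/-- Size of an independent set on the sphere of radius `k` that forces `H_n^1` or `K_{1,n}`. -/
def layerBound (n : ℕ) : ℕ → ℕ
  | 0 => 2
  | k + 1 => (n - 1) * (n * (2 * n + 1) + layerBound n k).choose (n * (2 * n + 1)) + 1

theorem hgraph1_or_star_of_dist_eq (hG : G.Connected) (r : V) (k : ℕ) {A : Finset V}
    (hA : G.IsIndepSet A) (hdist : ∀ a ∈ A, G.dist r a = k) (hcard : layerBound n k ≤ #A) :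
    HasInducedCopy G (Hgraph1 n) ∨ HasInducedCopy G (completeBipartiteGraph (Fin 1) (Fin n)) := by
  induction k generalizing A with
  | zero =>
    have : #A ≤ 1 := card_le_one.2 fun a ha b hb => by
      rw [← (hG r a).dist_eq_zero_iff.1 (hdist a ha), (hG r b).dist_eq_zero_iff.1 (hdist b hb)]
    simp only [layerBound] at hcard
    omega
  | succ k ih =>
    obtain h | h | ⟨B, hB, hBdist⟩ :=
      hgraph1_or_star_or_exists_isNIndepSet_of_dist_eq_succ hG hA hdist hcard
    · exact Or.inl h
    · exact Or.inr h
    · exact ih hB.isIndepSet hBdist hB.card_eq.ge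

end SimpleGraph

theorem stmt3_general (n : ℕ) :
    ∃ N : ℕ, ∀ (V : Type) (_ : Fintype V) (G : SimpleGraph V),
      G.Connected → (∃ s : Finset V, IsIndepSet' G ↑s ∧ N ≤ s.card) →
        HasInducedCopy G (SimpleGraph.pathGraph n) ∨
        HasInducedCopy G (Hgraph1 n) ∨
        HasInducedCopy G (completeBipartiteGraph (Fin 1) (Fin n)) := by
  classical
  refine ⟨(n - 1) * (range (n - 1)).sup (layerBound n), fun V _ G hG ⟨I, hI, hN⟩ => ?_⟩
  obtain ⟨r⟩ := hG.nonempty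
  by_cases hfar : ∃ v, n ≤ G.dist r v + 1
  · obtain ⟨v, hv⟩ := hfar
    exact Or.inl (hasInducedCopy_pathGraph_of_le_dist (hG r v) hv)
  push Not at hfar
  -- all of `I` lies on the `n - 1` spheres of radius `< n - 1` around `r`; one of them gets many
  obtain ⟨k, hk, hbig⟩ := exists_le_card_fiber_of_mul_le_card_of_maps_to
    (f := G.dist r) (t := range (n - 1)) (fun x _ => mem_range.2 (by have := hfar x; omega))
    (nonempty_range_iff.2 (by have := hfar r; rw [dist_self] at this; omega)) (by simpa using hN)
  exact Or.inr (hgraph1_or_star_of_dist_eq hG r k (hI.mono (coe_subset.2 (filter_subset _ _)))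
    (fun a ha => (mem_filter.1 ha).2) ((le_sup hk).trans hbig))

theorem stmt3 (n : ℕ) (hn : 1 ≤ n) :
    ∃ N : ℕ, ∀ (V : Type) (_ : Fintype V) (G : SimpleGraph V),
      G.Connected → (∃ s : Finset V, IsIndepSet' G ↑s ∧ N ≤ s.card) →
        HasInducedCopy G (SimpleGraph.pathGraph n) ∨
        HasInducedCopy G (Hgraph1 n) ∨
        HasInducedCopy G (completeBipartiteGraph (Fin 1) (Fin n)) :=
  stmt3_general n
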